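/- Let (V, b) be a finite-dimensional symplectic vector space over an algebraically closed field K of characteristic 2. Then sp(V) is isomorphic to the dual of S²(V) as an Sp(V)-module: there exists a K-linear bijection Θ : sp(V) → (S²(V))* such that Θ(gXg⁻¹)(s) = Θ(X)(g̃⁻¹ s) for all g ∈ Sp(V), all X ∈ sp(V) and all s ∈ S²(V), where g̃ denotes the map induced by g on S²(V). -/

import Mathlib

open scoped TensorProduct

/-- The symmetric square `S²(V)`: the quotient of `V ⊗ V` by the span of all
`x ⊗ y - y ⊗ x`. -/
noncomputable abbrev SymSq (K V : Type*) [Field K] [AddCommGroup V] [Module K V] : Type _ :=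
  TensorProduct K V V ⧸
    Submodule.span K {z : TensorProduct K V V | ∃ x y : V, z = x ⊗ₜ[K] y - y ⊗ₜ[K] x}

/-- The product `xy` in the symmetric square, i.e. the image of `x ⊗ y`. -/
noncomputable def SymSq.mul {K V : Type*} [Field K] [AddCommGroup V] [Module K V]
    (x y : V) : SymSq K V :=
  Submodule.Quotient.mk (x ⊗ₜ[K] y)

/-- The symplectic Lie algebra `sp(V)` of a bilinear form `b`:
all `X` with `b(Xv, w) + b(v, Xw) = 0`, as a submodule of `End(V)`. -/
def spSub (K V : Type*) [Field K] [AddCommGroup V] [Module K V]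
    (b : V →ₗ[K] V →ₗ[K] K) : Submodule K (Module.End K V) where
  carrier := {X | ∀ v w : V, b (X v) w + b v (X w) = 0}
  add_mem' := by
    intro X Y hX hY v w
    have h1 := hX v w
    have h2 := hY v w
    simp only [LinearMap.add_apply, map_add] at *
    linear_combination h1 + h2
  zero_mem' := by
    intro v w
    simp
  smul_mem' := by
    intro c X hX v w
    have h := hX v w
    simp only [LinearMap.smul_apply, map_smul, smul_eq_mul] at *
    linear_combination c * h

/-!
The isomorphism is `X ↦ (xy ↦ b(Xx, y))`. For `X ∈ sp(V)` the form `(x, y) ↦ b(Xx, y)` is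
symmetric, because an alternating form is skew, so it factors through `S²(V)`. Conversely, by
nondegeneracy of `b` every bilinear form on `V` is `b(X·, ·)` for a unique endomorphism `X`, and
symmetry of the form is exactly the condition `X ∈ sp(V)`. Equivariance is the identity
`b(gXg⁻¹x, y) = b(Xg⁻¹x, g⁻¹y)` for `g ∈ Sp(V)`.
-/

namespace SymSq

variable {K V M : Type*} [Field K] [AddCommGroup V] [Module K V] [AddCommGroup M] [Module K M]

lemma mul_comm (x y : V) : SymSq.mul (K := K) x y = SymSq.mul y x :=
  (Submodule.Quotient.eq _).mpr (Submodule.subset_span ⟨x, y, rfl⟩)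

@[ext]
lemma hom_ext {f g : SymSq K V →ₗ[K] M} (h : ∀ x y : V, f (mul x y) = g (mul x y)) : f = g :=
  Submodule.linearMap_qext _ (TensorProduct.ext' h)

noncomputable def lift (β : V →ₗ[K] V →ₗ[K] M) (hβ : ∀ x y, β x y = β y x) :
    SymSq K V →ₗ[K] M :=
  Submodule.liftQ _ (TensorProduct.lift β) <| Submodule.span_le.mpr <| by
    rintro _ ⟨x, y, rfl⟩
    simp [hβ x y]

@[simp]
lemma lift_mul (β : V →ₗ[K] V →ₗ[K] M) (hβ : ∀ x y, β x y = β y x) (x y : V) :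
    lift β hβ (mul x y) = β x y :=
  TensorProduct.lift.tmul x y

end SymSq

lemma LinearMap.SeparatingLeft.exists_end_apply_eq {K V : Type*} [Field K] [AddCommGroup V]
    [Module K V] [FiniteDimensional K V] {b : V →ₗ[K] V →ₗ[K] K} (hnd : b.SeparatingLeft)
    (β : V →ₗ[K] V →ₗ[K] K) : ∃ X : Module.End K V, ∀ x y, b (X x) y = β x y :=
  ⟨(LinearMap.BilinForm.toDual b (.ofSeparatingLeft hnd)).symm.toLinearMap ∘ₗ β,
    fun _ _ => LinearMap.BilinForm.apply_toDual_symm_apply (hB := .ofSeparatingLeft hnd) _ _⟩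

namespace spSub

variable {K V : Type*} [Field K] [AddCommGroup V] [Module K V] {b : V →ₗ[K] V →ₗ[K] K}

lemma apply_comm (hb : b.IsAlt) (X : spSub K V b) (x y : V) :
    b ((X : Module.End K V) x) y = b ((X : Module.End K V) y) x := by
  rw [eq_neg_of_add_eq_zero_left (X.2 x y), hb.neg]

noncomputable def toDualSymSq (hb : b.IsAlt) : spSub K V b →ₗ[K] Module.Dual K (SymSq K V) where
  toFun X := SymSq.lift (b ∘ₗ (X : Module.End K V)) (apply_comm hb X)
  map_add' X Y := SymSq.hom_ext fun x y => by simp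
  map_smul' c X := SymSq.hom_ext fun x y => by simp

@[simp]
lemma toDualSymSq_mul (hb : b.IsAlt) (X : spSub K V b) (x y : V) :
    toDualSymSq hb X (SymSq.mul x y) = b ((X : Module.End K V) x) y :=
  SymSq.lift_mul _ (apply_comm hb X) x y

lemma toDualSymSq_injective (hb : b.IsAlt) (hnd : b.SeparatingLeft) :
    Function.Injective (toDualSymSq hb) := by
  refine (injective_iff_map_eq_zero _).mpr fun X hX => ?_
  ext x : 2
  exact hnd _ fun y => by simpa using LinearMap.congr_fun hX (SymSq.mul x y)

lemma toDualSymSq_surjective [FiniteDimensional K V] (hb : b.IsAlt) (hnd : b.SeparatingLeft) :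
    Function.Surjective (toDualSymSq hb) := by
  intro φ
  obtain ⟨X, hX⟩ :=
    hnd.exists_end_apply_eq ((TensorProduct.mk K V V).compr₂ (φ ∘ₗ Submodule.mkQ _))
  have hXφ : ∀ x y, b (X x) y = φ (SymSq.mul x y) := hX
  have hmem : X ∈ spSub K V b := fun x y => by
    rw [← hb.neg (X y) x, hXφ, hXφ, SymSq.mul_comm y x, add_neg_cancel]
  exact ⟨⟨X, hmem⟩, SymSq.hom_ext fun x y => by simp [hXφ]⟩

noncomputable def equivDualSymSq [FiniteDimensional K V] (hb : b.IsAlt) (hnd : b.SeparatingLeft) :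
    spSub K V b ≃ₗ[K] Module.Dual K (SymSq K V) :=
  LinearEquiv.ofBijective (toDualSymSq hb)
    ⟨toDualSymSq_injective hb hnd, toDualSymSq_surjective hb hnd⟩

end spSub

lemma apply_eq_of_comp_eq_comp {K V : Type*} [Field K] [AddCommGroup V] [Module K V]
    {b : V →ₗ[K] V →ₗ[K] K} {g : V ≃ₗ[K] V} (hg : ∀ v w, b (g v) (g w) = b v w)
    {X Y : Module.End K V} (hXY : Y ∘ₗ g.toLinearMap = g.toLinearMap ∘ₗ X) (x y : V) :
    b (Y x) y = b (X (g.symm x)) (g.symm y) := by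
  have hY : Y x = g (X (g.symm x)) := by simpa using LinearMap.congr_fun hXY (g.symm x)
  rw [hY, ← hg _ (g.symm y), LinearEquiv.apply_symm_apply]

/-- The condition `Y = gXg⁻¹` is encoded as `Y ∘ g = g ∘ X`, and `g̃⁻¹` (the inverse of
the map induced by `g` on `S²(V)`) is encoded as the map induced by `g⁻¹`. -/
theorem stmt5_general (K : Type*) [Field K]
    (V : Type*) [AddCommGroup V] [Module K V] [FiniteDimensional K V]
    (b : V →ₗ[K] V →ₗ[K] K)
    (halt : ∀ v : V, b v v = 0)
    (hnd : ∀ v : V, (∀ w : V, b v w = 0) → v = 0) :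
    ∃ Θ : ↥(spSub K V b) ≃ₗ[K] Module.Dual K (SymSq K V),
      ∀ g : V ≃ₗ[K] V, (∀ v w : V, b (g v) (g w) = b v w) →
        ∀ gt : Module.End K (SymSq K V),
          (∀ x y : V, gt (SymSq.mul x y) = SymSq.mul (g.symm x) (g.symm y)) →
        ∀ X Y : ↥(spSub K V b),
          (↑Y : Module.End K V) ∘ₗ (↑g : V →ₗ[K] V)
            = (↑g : V →ₗ[K] V) ∘ₗ (↑X : Module.End K V) →
        ∀ s : SymSq K V, Θ Y s = Θ X (gt s) := by
  have hb : b.IsAlt := halt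
  refine ⟨spSub.equivDualSymSq hb hnd, fun g hg gt hgt X Y hXY => ?_⟩
  have hΘ : spSub.toDualSymSq hb Y = spSub.toDualSymSq hb X ∘ₗ gt :=
    SymSq.hom_ext fun x y => by simp [hgt, apply_eq_of_comp_eq_comp hg hXY]
  exact LinearMap.congr_fun hΘ

/-- `sp(V) ≅ S²(V)*` as `Sp(V)`-modules: there is a linear bijection
`Θ : sp(V) → S²(V)*` with `Θ(gXg⁻¹)(s) = Θ(X)(g̃⁻¹ s)` for all `g ∈ Sp(V)`.
The condition `Y = gXg⁻¹` is encoded as `Y ∘ g = g ∘ X`, and `g̃⁻¹` (the inverse of the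
map induced by `g` on `S²(V)`) is encoded as the map induced by `g⁻¹`. -/
theorem stmt5 (K : Type*) [Field K] [IsAlgClosed K] [CharP K 2]
    (V : Type*) [AddCommGroup V] [Module K V] [FiniteDimensional K V]
    (b : V →ₗ[K] V →ₗ[K] K)
    (halt : ∀ v : V, b v v = 0)
    (hnd : ∀ v : V, (∀ w : V, b v w = 0) → v = 0) :
    ∃ Θ : ↥(spSub K V b) ≃ₗ[K] Module.Dual K (SymSq K V),
      ∀ g : V ≃ₗ[K] V, (∀ v w : V, b (g v) (g w) = b v w) →
        ∀ gt : Module.End K (SymSq K V),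
          (∀ x y : V, gt (SymSq.mul x y) = SymSq.mul (g.symm x) (g.symm y)) →
        ∀ X Y : ↥(spSub K V b),
          (↑Y : Module.End K V) ∘ₗ (↑g : V →ₗ[K] V)
            = (↑g : V →ₗ[K] V) ∘ₗ (↑X : Module.End K V) →
        ∀ s : SymSq K V, Θ Y s = Θ X (gt s) :=
  stmt5_general K V b halt hnd
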